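/- Let (Γ̃_m)_{m≥0} be meromorphic functions of λ ∈ ℂ defined by Γ̃_0(λ) = 1 and the recursion m(m-2λ) Γ̃_m(λ) = Σ_{n=1}^m d_n Γ̃_{m-n}(λ), where (d_n)_{n≥1} are fixed complex constants. Then for each m ≥ 1, Γ̃_m is a rational function of λ all of whose poles are simple and contained in the set {1/2, 1, 3/2, ..., m/2}. -/
import Mathlib


/-- The coefficients `Γ̃_m` of the Harish-Chandra series, defined as rational
functions of `λ` by `Γ̃_0 = 1` and the recursion
`m(m-2λ) Γ̃_m(λ) = ∑_{n=1}^m d_n Γ̃_{m-n}(λ)`, have only simple poles contained in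
`{1/2, 1, 3/2, ..., m/2}`; equivalently `Γ̃_m · ∏_{j=1}^m (λ - j/2)` is a polynomial. -/
theorem stmt_4 (d : ℕ → ℂ) (Γ : ℕ → RatFunc ℂ) (h0 : Γ 0 = 1)
    (hrec : ∀ m : ℕ, 1 ≤ m →
      RatFunc.C (m : ℂ) * (RatFunc.C (m : ℂ) - 2 * RatFunc.X) * Γ m
        = ∑ n ∈ Finset.Icc 1 m, RatFunc.C (d n) * Γ (m - n)) :
    ∀ m : ℕ, 1 ≤ m → ∃ P : Polynomial ℂ,
      Γ m * algebraMap (Polynomial ℂ) (RatFunc ℂ)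
          (∏ j ∈ Finset.Icc 1 m, (Polynomial.X - Polynomial.C ((j : ℂ) / 2)))
        = algebraMap (Polynomial ℂ) (RatFunc ℂ) P := by
  set am := algebraMap (Polynomial ℂ) (RatFunc ℂ) with ham
  set pol : ℕ → Polynomial ℂ :=
    fun m => ∏ j ∈ Finset.Icc 1 m, (Polynomial.X - Polynomial.C ((j : ℂ) / 2)) with hpol
  suffices h : ∀ m : ℕ, ∃ P : Polynomial ℂ, Γ m * am (pol m) = am P by
    exact fun m _ => h m
  intro m
  induction m using Nat.strong_induction_on with
  | _ m ih =>
    match m with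
    | 0 => exact ⟨1, by simp [h0, hpol]⟩
    | Nat.succ k =>
      set m := k + 1 with hmk
      have hm1 : 1 ≤ m := by omega
      have hm := hrec m hm1
      have hmC : ((m : ℂ)) ≠ 0 := Nat.cast_ne_zero.mpr (by omega)
      -- each summand times pol k is a polynomial
      have hP : ∀ n : ℕ, ∃ R : Polynomial ℂ,
          n ∈ Finset.Icc 1 m → Γ (m - n) * am (pol k) = am R := by
        intro n
        by_cases hn : n ∈ Finset.Icc 1 m
        · simp only [Finset.mem_Icc] at hn
          obtain ⟨P, hPn⟩ := ih (m - n) (by omega)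
          have hdvd : pol (m - n) ∣ pol k := by
            apply Finset.prod_dvd_prod_of_subset
            exact Finset.Icc_subset_Icc le_rfl (by omega)
          obtain ⟨Q, hQ⟩ := hdvd
          refine ⟨P * Q, fun _ => ?_⟩
          rw [hQ, map_mul, ← mul_assoc, hPn, ← map_mul]
        · exact ⟨0, fun h => absurd h hn⟩
      choose R hR using hP
      -- key algebraic identity
      have h2 : (2 : RatFunc ℂ) * RatFunc.C ((m : ℂ) / 2) = RatFunc.C (m : ℂ) := by
        rw [show (2 : RatFunc ℂ) = RatFunc.C 2 from (map_ofNat RatFunc.C 2).symm, ← map_mul]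
        congr 1
        ring
      have key : RatFunc.C (m : ℂ) * (RatFunc.C (m : ℂ) - 2 * RatFunc.X)
          = (-2 * RatFunc.C (m : ℂ)) * (RatFunc.X - RatFunc.C ((m : ℂ) / 2)) := by
        linear_combination (-RatFunc.C ((m : ℂ))) * h2
      have hu : (-2 * RatFunc.C (m : ℂ)) ≠ 0 := by
        refine mul_ne_zero (neg_ne_zero.mpr ?_) ?_
        · rw [show (2 : RatFunc ℂ) = RatFunc.C 2 from (map_ofNat RatFunc.C 2).symm, ne_eq,
            map_eq_zero]
          norm_num
        rwa [ne_eq, map_eq_zero]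
      rw [key] at hm
      have hG : Γ m * (RatFunc.X - RatFunc.C ((m : ℂ) / 2))
          = (-2 * RatFunc.C (m : ℂ))⁻¹ * ∑ n ∈ Finset.Icc 1 m, RatFunc.C (d n) * Γ (m - n) := by
        rw [eq_inv_mul_iff_mul_eq₀ hu]
        linear_combination hm
      have hpolm : pol m = pol k * (Polynomial.X - Polynomial.C ((m : ℂ) / 2)) := by
        simp only [hpol, hmk]
        exact Finset.prod_Icc_succ_top (by omega) _
      refine ⟨Polynomial.C ((-2 * (m : ℂ))⁻¹) * ∑ n ∈ Finset.Icc 1 m,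
        Polynomial.C (d n) * R n, ?_⟩
      rw [hpolm, map_mul, map_sub, RatFunc.algebraMap_X, RatFunc.algebraMap_C]
      have lhs_eq : Γ m * (am (pol k) * (RatFunc.X - RatFunc.C ((m : ℂ) / 2)))
          = (-2 * RatFunc.C (m : ℂ))⁻¹
            * ∑ n ∈ Finset.Icc 1 m, RatFunc.C (d n) * (Γ (m - n) * am (pol k)) := by
        calc Γ m * (am (pol k) * (RatFunc.X - RatFunc.C ((m : ℂ) / 2)))
            = (Γ m * (RatFunc.X - RatFunc.C ((m : ℂ) / 2))) * am (pol k) := by ring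
          _ = (-2 * RatFunc.C (m : ℂ))⁻¹
              * ∑ n ∈ Finset.Icc 1 m, RatFunc.C (d n) * (Γ (m - n) * am (pol k)) := by
              rw [hG, mul_assoc, Finset.sum_mul]
              congr 1
              exact Finset.sum_congr rfl fun n hn => by ring
      rw [lhs_eq, map_mul, map_sum]
      congr 1
      · rw [RatFunc.algebraMap_C, map_inv₀, map_mul, map_neg, map_ofNat]
      · refine Finset.sum_congr rfl fun n hn => ?_
        rw [map_mul, RatFunc.algebraMap_C, hR n hn]
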